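/- If a finite signed Borel measure μ on ℝ̄ = ℝ ∪ {±∞} satisfies ∫ (A h) dμ = 0 for all h ∈ 𝒳, then μ = 0, where A h denotes the continuous extension of x ↦ h(x)/(1 + |x|) to ℝ̄. -/
import Mathlib


open MeasureTheory

noncomputable def ReLU (t : ℝ) : ℝ := max t 0

noncomputable def Xspan : Submodule ℝ (ℝ → ℝ) :=
  Submodule.span ℝ {f | ∃ a b : ℝ, a ≠ 0 ∧ f = fun x => ReLU (a * x + b)}

noncomputable def sInt (μ : SignedMeasure EReal) (g : EReal → ℝ) : ℝ :=
  (∫ x, g x ∂μ.toJordanDecomposition.posPart) -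
  (∫ x, g x ∂μ.toJordanDecomposition.negPart)

open Set Filter Topology

lemma relu_nonneg (t : ℝ) : 0 ≤ ReLU t := le_max_right _ _

lemma relu_of_nonneg {t : ℝ} (h : 0 ≤ t) : ReLU t = t := max_eq_left h

lemma relu_of_nonpos {t : ℝ} (h : t ≤ 0) : ReLU t = 0 := max_eq_right h

lemma relu_cont : Continuous ReLU := continuous_id.max continuous_const

lemma gen_mem (a b : ℝ) (ha : a ≠ 0) : (fun x => ReLU (a * x + b)) ∈ Xspan :=
  Submodule.subset_span ⟨a, b, ha, rfl⟩

lemma cont_gen (a b : ℝ) : Continuous fun x => ReLU (a * x + b) :=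
  relu_cont.comp (by fun_prop)

lemma one_mem : (fun _ : ℝ => (1:ℝ)) ∈ Xspan := by
  have h : (fun _ : ℝ => (1:ℝ)) =
      (fun x => ReLU (1 * x + 0)) + (fun x => ReLU ((-1) * x + 1))
        - (fun x => ReLU ((-1) * x + 0)) - (fun x => ReLU (1 * x + (-1))) := by
    funext x
    simp only [Pi.add_apply, Pi.sub_apply]
    rcases le_total x 0 with hx | hx
    · rw [relu_of_nonpos (by linarith), relu_of_nonneg (by linarith),
        relu_of_nonneg (by linarith), relu_of_nonpos (by linarith)]
      ring
    · rcases le_total x 1 with hx1 | hx1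
      · rw [relu_of_nonneg (by linarith), relu_of_nonneg (by linarith),
          relu_of_nonpos (by linarith), relu_of_nonpos (by linarith)]
        ring
      · rw [relu_of_nonneg (by linarith), relu_of_nonpos (by linarith),
          relu_of_nonpos (by linarith), relu_of_nonneg (by linarith)]
        ring
  rw [h]
  exact Submodule.sub_mem _ (Submodule.sub_mem _
    (Submodule.add_mem _ (gen_mem 1 0 one_ne_zero) (gen_mem (-1) 1 (by norm_num)))
    (gen_mem (-1) 0 (by norm_num))) (gen_mem 1 (-1) one_ne_zero)

/-- Build the continuous extension `H` on `EReal` from a suitable real function. -/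
lemma buildH (c d : ℝ) (f : ℝ → ℝ) (hcont : Continuous f)
    (h1 : ∀ x : ℝ, x ≤ c → f x = 1 + |x|) (h2 : ∀ x : ℝ, d ≤ x → f x = 0)
    (h3 : ∀ x : ℝ, 0 ≤ f x) (h4 : ∀ x : ℝ, f x ≤ 1 + |x|) :
    ∃ H : EReal → ℝ, Continuous H ∧ (∀ x : ℝ, H (x : EReal) = f x / (1 + |x|)) ∧
      (∀ y, 0 ≤ H y) ∧ (∀ y, H y ≤ 1) ∧
      (∀ y : EReal, y ≤ (c : EReal) → H y = 1) ∧
      (∀ y : EReal, (d : EReal) ≤ y → H y = 0) := by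
  classical
  set H : EReal → ℝ := fun y =>
    if y = ⊥ then 1 else if y = ⊤ then 0 else f y.toReal / (1 + |y.toReal|) with hH
  have habs : ∀ x : ℝ, (0:ℝ) < 1 + |x| := fun x => by positivity
  have hrep : ∀ x : ℝ, H (x : EReal) = f x / (1 + |x|) := by
    intro x
    simp [hH, EReal.coe_ne_bot, EReal.coe_ne_top, EReal.toReal_coe]
  have hone : ∀ y : EReal, y ≤ (c : EReal) → H y = 1 := by
    intro y hy
    induction y using EReal.rec with
    | bot => simp [hH]
    | coe a =>
      have ha : a ≤ c := by exact_mod_cast hy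
      rw [hrep a, h1 a ha, div_self (habs a).ne']
    | top => exact absurd hy (not_le.mpr (EReal.coe_lt_top c))
  have hzero : ∀ y : EReal, (d : EReal) ≤ y → H y = 0 := by
    intro y hy
    induction y using EReal.rec with
    | bot => exact absurd hy (not_le.mpr (EReal.bot_lt_coe d))
    | coe a =>
      have ha : d ≤ a := by exact_mod_cast hy
      rw [hrep a, h2 a ha, zero_div]
    | top => simp [hH]
  have hnn : ∀ y, 0 ≤ H y := by
    intro y
    induction y using EReal.rec with
    | bot => simp [hH]
    | coe a => rw [hrep a]; exact div_nonneg (h3 a) (habs a).le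
    | top => simp [hH]
  have hle : ∀ y, H y ≤ 1 := by
    intro y
    induction y using EReal.rec with
    | bot => simp [hH]
    | coe a => rw [hrep a]; exact (div_le_one (habs a)).mpr (h4 a)
    | top => simp [hH]
  have hHcont : Continuous H := by
    rw [continuous_iff_continuousAt]
    intro y
    induction y using EReal.rec with
    | bot =>
      apply Filter.EventuallyEq.continuousAt (y := 1)
      filter_upwards [Iio_mem_nhds (EReal.bot_lt_coe c)] with z hz
      exact hone z (le_of_lt hz)
    | coe a =>
      rw [← EReal.isOpenEmbedding_coe.continuousAt_iff]
      have : (H ∘ (fun x : ℝ => (x : EReal))) = fun x : ℝ => f x / (1 + |x|) :=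
        funext fun x => hrep x
      rw [this]
      exact (hcont.div (by fun_prop) (fun x => (habs x).ne')).continuousAt
    | top =>
      apply Filter.EventuallyEq.continuousAt (y := 0)
      filter_upwards [Ioi_mem_nhds (EReal.coe_lt_top d)] with z hz
      exact hzero z (le_of_lt hz)
  exact ⟨H, hHcont, hrep, hnn, hle, hone, hzero⟩

/-- The key construction: a ramp function in `Xspan` whose normalized extension is a
continuous approximation of the indicator of `Iic c`. -/
lemma ramp (c d : ℝ) (hcd : c < d) (hsign : d ≤ 0 ∨ 0 ≤ c) :
    ∃ f ∈ Xspan, ∃ H : EReal → ℝ, Continuous H ∧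
      (∀ x : ℝ, H (x : EReal) = f x / (1 + |x|)) ∧
      (∀ y, 0 ≤ H y) ∧ (∀ y, H y ≤ 1) ∧
      (∀ y : EReal, y ≤ (c : EReal) → H y = 1) ∧
      (∀ y : EReal, (d : EReal) ≤ y → H y = 0) := by
  have hdc : (0:ℝ) < d - c := by linarith
  rcases hsign with hd0 | hc0
  · -- case d ≤ 0
    set A : ℝ := (1 - c) / (d - c) with hA
    have hAdc : A * (d - c) = 1 - c := div_mul_cancel₀ _ hdc.ne'
    have hApos : 0 < A := div_pos (by linarith) hdc
    refine ⟨fun x => A * ReLU ((-1) * x + d) + (1 - A) * ReLU ((-1) * x + c), ?_, ?_⟩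
    · exact Submodule.add_mem _ (Submodule.smul_mem _ A (gen_mem (-1) d (by norm_num)))
        (Submodule.smul_mem _ (1 - A) (gen_mem (-1) c (by norm_num)))
    · apply buildH c d
      · exact (continuous_const.mul (cont_gen (-1) d)).add (continuous_const.mul (cont_gen (-1) c))
      · intro x hx
        rw [relu_of_nonneg (by linarith), relu_of_nonneg (by linarith),
          abs_of_nonpos (by linarith)]
        linear_combination hAdc
      · intro x hx
        rw [relu_of_nonpos (by linarith), relu_of_nonpos (by linarith)]
        ring
      · intro x
        rcases le_total x c with hx | hx
        · have : A * ReLU ((-1) * x + d) + (1 - A) * ReLU ((-1) * x + c) = 1 + |x| := by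
            rw [relu_of_nonneg (by linarith), relu_of_nonneg (by linarith),
              abs_of_nonpos (by linarith)]
            linear_combination hAdc
          rw [this]; positivity
        · rw [relu_of_nonpos (t := (-1) * x + c) (by linarith)]
          have : (0:ℝ) ≤ ReLU ((-1) * x + d) := relu_nonneg _
          nlinarith
      · intro x
        rcases le_total x c with hx | hx
        · rw [relu_of_nonneg (by linarith), relu_of_nonneg (by linarith),
            abs_of_nonpos (by linarith)]
          linarith [hAdc]
        · rcases le_total x d with hxd | hxd
          · rw [relu_of_nonneg (by linarith), relu_of_nonpos (by linarith),
              abs_of_nonpos (by linarith)]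
            rw [hA, mul_zero, add_zero, div_mul_eq_mul_div, div_le_iff₀ hdc]
            nlinarith [mul_nonneg (by linarith : (0:ℝ) ≤ 1 - d) (by linarith : (0:ℝ) ≤ x - c)]
          · rw [relu_of_nonpos (by linarith), relu_of_nonpos (by linarith)]
            have := abs_nonneg x
            nlinarith
  · -- case 0 ≤ c
    set m : ℝ := (1 + c) / (d - c) with hm
    have hmdc : m * (d - c) = 1 + c := div_mul_cancel₀ _ hdc.ne'
    have hmpos : 0 < m := div_pos (by linarith) hdc
    refine ⟨fun x => ReLU ((-1) * x + 0) + 1 + ReLU (1 * x + 0)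
        + (-(m+1)) * ReLU (1 * x + (-c)) + m * ReLU (1 * x + (-d)), ?_, ?_⟩
    · exact Submodule.add_mem _ (Submodule.add_mem _ (Submodule.add_mem _
        (Submodule.add_mem _ (gen_mem (-1) 0 (by norm_num)) one_mem)
        (gen_mem 1 0 one_ne_zero))
        (Submodule.smul_mem _ (-(m+1)) (gen_mem 1 (-c) one_ne_zero)))
        (Submodule.smul_mem _ m (gen_mem 1 (-d) one_ne_zero))
    · apply buildH c d
      · exact (((((cont_gen (-1) 0).add continuous_const).add (cont_gen 1 0)).add
          (continuous_const.mul (cont_gen 1 (-c)))).add (continuous_const.mul (cont_gen 1 (-d))))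
      · intro x hx
        rw [relu_of_nonpos (t := 1 * x + (-c)) (by linarith),
          relu_of_nonpos (t := 1 * x + (-d)) (by linarith)]
        rcases le_total x 0 with hx0 | hx0
        · rw [relu_of_nonneg (by linarith), relu_of_nonpos (by linarith),
            abs_of_nonpos hx0]
          ring
        · rw [relu_of_nonpos (by linarith), relu_of_nonneg (by linarith),
            abs_of_nonneg hx0]
          ring
      · intro x hx
        rw [relu_of_nonpos (by linarith), relu_of_nonneg (by linarith),
          relu_of_nonneg (by linarith), relu_of_nonneg (by linarith)]
        linear_combination -hmdc
      · intro x
        rcases le_total x c with hx | hx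
        · rw [relu_of_nonpos (t := 1 * x + (-c)) (by linarith),
            relu_of_nonpos (t := 1 * x + (-d)) (by linarith)]
          rcases le_total x 0 with hx0 | hx0
          · rw [relu_of_nonneg (by linarith), relu_of_nonpos (by linarith)]; linarith
          · rw [relu_of_nonpos (by linarith), relu_of_nonneg (by linarith)]; linarith
        · rcases le_total x d with hxd | hxd
          · rw [relu_of_nonpos (by linarith), relu_of_nonneg (by linarith),
              relu_of_nonneg (by linarith), relu_of_nonpos (by linarith)]
            nlinarith [hmdc, mul_nonneg hmpos.le (by linarith : (0:ℝ) ≤ d - x)]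
          · rw [relu_of_nonpos (by linarith), relu_of_nonneg (by linarith),
              relu_of_nonneg (by linarith), relu_of_nonneg (by linarith)]
            nlinarith [hmdc]
      · intro x
        rcases le_total x c with hx | hx
        · rw [relu_of_nonpos (t := 1 * x + (-c)) (by linarith),
            relu_of_nonpos (t := 1 * x + (-d)) (by linarith)]
          rcases le_total x 0 with hx0 | hx0
          · rw [relu_of_nonneg (by linarith), relu_of_nonpos (by linarith),
              abs_of_nonpos hx0]
            linarith
          · rw [relu_of_nonpos (by linarith), relu_of_nonneg (by linarith),
              abs_of_nonneg hx0]
            linarith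
        · rcases le_total x d with hxd | hxd
          · rw [relu_of_nonpos (by linarith), relu_of_nonneg (by linarith),
              relu_of_nonneg (by linarith), relu_of_nonpos (by linarith),
              abs_of_nonneg (by linarith)]
            nlinarith [mul_nonneg hmpos.le (by linarith : (0:ℝ) ≤ x - c)]
          · rw [relu_of_nonpos (by linarith), relu_of_nonneg (by linarith),
              relu_of_nonneg (by linarith), relu_of_nonneg (by linarith),
              abs_of_nonneg (by linarith)]
            nlinarith

/-- Main approximation lemma: the positive and negative Jordan parts agree on `Iic t`. -/
lemma key_lemma (μ : SignedMeasure EReal)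
    (hyp : ∀ f ∈ Xspan, ∀ H : EReal → ℝ, Continuous H →
        (∀ x : ℝ, H (x : EReal) = f x / (1 + |x|)) → sInt μ H = 0)
    (t : EReal) (c d : ℕ → ℝ) (hcd : ∀ n, c n < d n) (hsign : ∀ n, d n ≤ 0 ∨ 0 ≤ c n)
    (h1 : ∀ y : EReal, y ≤ t → ∀ n, y ≤ (c n : EReal))
    (h2 : ∀ y : EReal, ¬ y ≤ t → ∀ᶠ n in atTop, (d n : EReal) ≤ y) :
    μ.toJordanDecomposition.posPart (Iic t) = μ.toJordanDecomposition.negPart (Iic t) := by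
  choose f fmem H Hcont Hrep Hnn Hle Hone Hzero using fun n => ramp (c n) (d n) (hcd n) (hsign n)
  set P := μ.toJordanDecomposition.posPart with hP
  set N := μ.toJordanDecomposition.negPart with hN
  have hint : ∀ n, ∫ y, H n y ∂P = ∫ y, H n y ∂N := by
    intro n
    have := hyp (f n) (fmem n) (H n) (Hcont n) (Hrep n)
    rw [sInt] at this
    exact sub_eq_zero.mp this
  set g : EReal → ℝ := (Iic t).indicator (1 : EReal → ℝ) with hg
  have hglim : ∀ y, Tendsto (fun n => H n y) atTop (𝓝 (g y)) := by
    intro y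
    by_cases hy : y ≤ t
    · have heq : ∀ n, H n y = 1 := fun n => Hone n y (h1 y hy n)
      have hgy : g y = 1 := by simp [hg, Set.indicator_apply, Set.mem_Iic, hy]
      rw [hgy]
      simpa [heq] using (tendsto_const_nhds : Tendsto (fun _ : ℕ => (1:ℝ)) atTop (𝓝 1))
    · have hev : ∀ᶠ n in atTop, H n y = 0 := (h2 y hy).mono fun n hn => Hzero n y hn
      have hgy : g y = 0 := by simp [hg, Set.indicator_apply, Set.mem_Iic, hy]
      rw [hgy]
      exact Tendsto.congr' (hev.mono fun n hn => hn.symm) tendsto_const_nhds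
  have dct : ∀ (ν : Measure EReal), IsFiniteMeasure ν →
      Tendsto (fun n => ∫ y, H n y ∂ν) atTop (𝓝 (∫ y, g y ∂ν)) := by
    intro ν hν
    refine tendsto_integral_of_dominated_convergence (fun _ => 1)
      (fun n => (Hcont n).aestronglyMeasurable) (integrable_const 1)
      (fun n => Eventually.of_forall fun y => ?_) (Eventually.of_forall hglim)
    show ‖H n y‖ ≤ 1
    rw [Real.norm_eq_abs]
    exact abs_le.mpr ⟨by linarith [Hnn n y], Hle n y⟩
  have huniq : ∫ y, g y ∂P = ∫ y, g y ∂N :=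
    tendsto_nhds_unique (Tendsto.congr hint (dct P inferInstance)) (dct N inferInstance)
  rw [hg, integral_indicator_one measurableSet_Iic, integral_indicator_one measurableSet_Iic]
    at huniq
  exact (ENNReal.toReal_eq_toReal_iff' (measure_ne_top P _) (measure_ne_top N _)).mp huniq

lemma real_case (μ : SignedMeasure EReal)
    (hyp : ∀ f ∈ Xspan, ∀ H : EReal → ℝ, Continuous H →
        (∀ x : ℝ, H (x : EReal) = f x / (1 + |x|)) → sInt μ H = 0)
    (r e : ℝ) (he : 0 < e) (hsign : ∀ n : ℕ, r + e / (n + 1) ≤ 0 ∨ 0 ≤ r) :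
    μ.toJordanDecomposition.posPart (Iic (r : EReal)) =
      μ.toJordanDecomposition.negPart (Iic (r : EReal)) := by
  apply key_lemma μ hyp _ (fun _ => r) (fun n => r + e / (n + 1))
  · intro n
    have : (0:ℝ) < e / (n + 1) := div_pos he (by positivity)
    linarith
  · exact hsign
  · intro y hy n
    induction y using EReal.rec with
    | bot => exact bot_le
    | coe a => exact hy
    | top => exact absurd hy (not_le.mpr (EReal.coe_lt_top r))
  · intro y hy
    induction y using EReal.rec with
    | bot => exact absurd bot_le hy
    | coe a =>
      have har : r < a := by
        by_contra hra
        exact hy (by exact_mod_cast not_lt.mp hra)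
      obtain ⟨M, hM⟩ := exists_nat_gt (e / (a - r))
      filter_upwards [eventually_ge_atTop M] with n hn
      have hd : r + e / (n + 1) ≤ a := by
        have h1 : e / (a - r) < M := hM
        have h2 : e < M * (a - r) := by
          rwa [div_lt_iff₀ (by linarith)] at h1
        have h3 : e / (n + 1) ≤ a - r := by
          rw [div_le_iff₀ (by positivity : (0:ℝ) < (n:ℝ) + 1)]
          have : (M:ℝ) ≤ n := by exact_mod_cast hn
          nlinarith
        linarith
      exact_mod_cast hd
    | top => exact Eventually.of_forall fun n => le_top

theorem annihilates_X_implies_zero (μ : SignedMeasure EReal)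
    (h : ∀ f ∈ Xspan, ∀ H : EReal → ℝ, Continuous H →
        (∀ x : ℝ, H (x : EReal) = f x / (1 + |x|)) → sInt μ H = 0) :
    μ = 0 := by
  set P := μ.toJordanDecomposition.posPart with hP
  set N := μ.toJordanDecomposition.negPart with hN
  have hIic : ∀ t : EReal, P (Iic t) = N (Iic t) := by
    intro t
    induction t using EReal.rec with
    | bot =>
      apply key_lemma μ h _ (fun n => -((n:ℝ) + 1)) (fun n => -(n:ℝ))
      · intro n; linarith
      · intro n; left; simp
      · intro y hy n
        rw [le_bot_iff.mp hy]
        exact bot_le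
      · intro y hy
        induction y using EReal.rec with
        | bot => exact absurd le_rfl hy
        | coe a =>
          obtain ⟨M, hM⟩ := exists_nat_ge (-a)
          filter_upwards [eventually_ge_atTop M] with n hn
          have : -(n:ℝ) ≤ a := by
            have : (M:ℝ) ≤ n := by exact_mod_cast hn
            linarith
          exact_mod_cast this
        | top => exact Eventually.of_forall fun n => le_top
    | coe r =>
      rcases le_or_gt 0 r with hr | hr
      · exact real_case μ h r 1 one_pos (fun n => Or.inr hr)
      · apply real_case μ h r (-r) (by linarith)
        intro n
        left
        have h1 : (-r) / ((n:ℝ) + 1) ≤ -r :=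
          div_le_self (by linarith) (by linarith [Nat.cast_nonneg (α := ℝ) n])
        linarith
    | top =>
      have hmem : (fun x : ℝ => 1 + ReLU (1 * x + 0) + ReLU ((-1) * x + 0)) ∈ Xspan :=
        Submodule.add_mem _ (Submodule.add_mem _ one_mem (gen_mem 1 0 one_ne_zero))
          (gen_mem (-1) 0 (by norm_num))
      have hrep : ∀ x : ℝ, (fun _ : EReal => (1:ℝ)) (x : EReal)
          = (1 + ReLU (1 * x + 0) + ReLU ((-1) * x + 0)) / (1 + |x|) := by
        intro x
        have habs : (0:ℝ) < 1 + |x| := by positivity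
        rcases le_total x 0 with hx | hx
        · rw [relu_of_nonpos (by linarith), relu_of_nonneg (by linarith),
            abs_of_nonpos hx, eq_div_iff (by linarith : (1:ℝ) + -x ≠ 0)]
          ring
        · rw [relu_of_nonneg (by linarith), relu_of_nonpos (by linarith),
            abs_of_nonneg hx, eq_div_iff (by linarith : (1:ℝ) + x ≠ 0)]
          ring
      have := h _ hmem (fun _ => 1) continuous_const hrep
      rw [sInt] at this
      simp only [integral_const, smul_eq_mul, mul_one] at this
      have huniv : P univ = N univ := by
        exact (ENNReal.toReal_eq_toReal_iff' (measure_ne_top P _) (measure_ne_top N _)).mp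
          (sub_eq_zero.mp this)
      simpa using huniv
  have hPN : P = N := Measure.ext_of_Iic P N hIic
  have hsing := μ.toJordanDecomposition.mutuallySingular
  rw [← hP, ← hN, ← hPN] at hsing
  have hP0 : P = 0 := (Measure.MutuallySingular.self_iff P).mp hsing
  have hN0 : N = 0 := hPN ▸ hP0
  have hJ0 : μ.toJordanDecomposition = (0 : SignedMeasure EReal).toJordanDecomposition := by
    rw [SignedMeasure.toJordanDecomposition_zero]
    exact MeasureTheory.JordanDecomposition.ext (by rw [← hP, hP0]; rfl) (by rw [← hN, hN0]; rfl)
  have := congrArg MeasureTheory.JordanDecomposition.toSignedMeasure hJ0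
  rwa [SignedMeasure.toSignedMeasure_toJordanDecomposition,
    SignedMeasure.toSignedMeasure_toJordanDecomposition] at this
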